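/- For every integer k ≥ 1 and every real Δ with 0 < Δ < 5/4, the following finite-sum hypergeometric identity holds: Σ_{n=1}^k (−1/4)^n [(−Δ)_n ((1+Δ)/3)_n / (((5−4Δ)/6)_n n!)] · [((2n)_{2k−2n})² / ((2n+2k−1)_{2k−2n} (2k−2n)!)] · Σ_{m=0}^{2k−2n} [(2n−2k)_m (2n+2k−1)_m (n)_m] / [((2n)_m)² m!] = binom(4k−2, 2k−1)^{−1} · [Δ(1+Δ)/(5−4Δ)] · Σ_{m=0}^{k−1} [(1−k)_m (k+1/2)_m (1−Δ)_m ((4+Δ)/3)_m] / [(1)_m (2)_m ((11−4Δ)/6)_m m!]. -/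

import Mathlib

/-!
The identity holds term by term: the `n`-th term on the left equals the `(n - 1)`-st term on
the right. With `j = k - n`, the inner sum is the terminating
`₃F₂(-2j, 4n + 2j - 1, n; 2n, 2n; 1)`, which Watson's theorem evaluates to
`(1/2)_j (n)_j / ((n + 1/2)_j (2n)_j)`. This evaluation is proved by induction on `j`
through a Zeilberger recurrence whose right side telescopes in the summation index.
After it, the `Δ`-free factors on both sides are ratios of factorials, and the `Δ`-dependent
ones match through `(x)_n = x (x + 1)_{n-1}`.
-/

/-- Pochhammer symbol `(x)_m = x(x+1)⋯(x+m−1)`, with `(x)_0 = 1`. -/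
noncomputable def poch (x : ℝ) : ℕ → ℝ
  | 0 => 1
  | m + 1 => poch x m * (x + m)

open Finset Nat

@[simp] lemma poch_zero (x : ℝ) : poch x 0 = 1 := rfl

lemma poch_succ (x : ℝ) (m : ℕ) : poch x (m + 1) = poch x m * (x + m) := rfl

lemma poch_succ' (x : ℝ) (m : ℕ) : poch x (m + 1) = x * poch (x + 1) m := by
  induction m with
  | zero => simp [poch_succ]
  | succ m ih => rw [poch_succ, ih, poch_succ]; push_cast; ring

lemma poch_add_two (x : ℝ) (m : ℕ) : poch x (m + 2) = poch x m * (x + m) * (x + m + 1) := by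
  rw [poch_succ, poch_succ]; push_cast; ring

lemma poch_add_two' (x : ℝ) (m : ℕ) : poch x (m + 2) = x * (x + 1) * poch (x + 2) m := by
  rw [poch_succ', poch_succ', add_assoc, one_add_one_eq_two, mul_assoc]

lemma poch_pos {x : ℝ} (hx : 0 < x) (m : ℕ) : 0 < poch x m := by
  induction m with
  | zero => simp
  | succ m ih => rw [poch_succ]; positivity

lemma poch_neg_natCast_of_lt {a m : ℕ} (h : a < m) : poch (-a) m = 0 := by
  obtain ⟨m, rfl⟩ := Nat.exists_eq_add_of_lt h
  induction m with
  | zero => simp [poch_succ]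
  | succ m ih => rw [← add_assoc, poch_succ, ih (by omega), zero_mul]

lemma poch_eq_factorial_div {x : ℝ} {a s b : ℕ} (hx : x = a + 1) (hb : a + s = b) :
    poch x s = b ! / a ! := by
  subst hx hb
  induction s with
  | zero => simp [field]
  | succ s ih =>
    rw [poch_succ, ih, ← add_assoc, factorial_succ]
    push_cast
    field_simp
    ring

lemma poch_eq_factorial_half {x : ℝ} {a s b : ℕ} (hx : x = a + 1 / 2) (hb : a + s = b) :
    poch x s = (2 * b)! * a ! / ((2 * a)! * b ! * 4 ^ s) := by
  subst hx hb
  induction s with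
  | zero => simp [field]
  | succ s ih =>
    rw [poch_succ, ih, show 2 * (a + (s + 1)) = 2 * (a + s) + 1 + 1 by ring, ← add_assoc,
      factorial_succ, factorial_succ, factorial_succ]
    push_cast
    field_simp
    ring

lemma poch_neg_eq_factorial_div {x : ℝ} {a s b : ℕ} (hx : x = -a) (hb : s + b = a) :
    poch x s = (-1) ^ s * (a ! / b !) := by
  subst hx hb
  induction s generalizing b with
  | zero => simp [field]
  | succ s ih =>
    rw [poch_succ, show s + 1 + b = s + (b + 1) by ring, ih, factorial_succ]
    push_cast
    field_simp
    ring

lemma poch_one (m : ℕ) : poch 1 m = m ! := by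
  rw [poch_eq_factorial_div (a := 0) (by simp) (zero_add m), factorial_zero, cast_one, div_one]

lemma poch_two (m : ℕ) : poch 2 m = (m + 1)! := by
  rw [poch_eq_factorial_div (a := 1) (by norm_num) (add_comm 1 m), factorial_one, cast_one,
    div_one]

section Watson

variable (c : ℝ) (j : ℕ)

noncomputable def watsonTerm (m : ℕ) : ℝ :=
  poch (-(2 * j)) m * poch (4 * c + 2 * j - 1) m * poch c m / (poch (2 * c) m ^ 2 * m !)

-- Zeilberger's certificate for the recurrence `watsonTerm_succ_sub` in `j`.
noncomputable def watsonCertificate (m : ℕ) : ℝ :=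
  -m * (2 * c + m - 1) ^ 2 * (4 * c + 4 * j + 1)
      / ((4 * c + 2 * j - 1) * (2 * c + 2 * j + 1) * (2 * c + j) * (2 * j + 2))
    * (poch (-(2 * j) - 2) m * poch (4 * c + 2 * j - 1) m * poch c m
      / (poch (2 * c) m ^ 2 * m !))

noncomputable def watsonValue : ℝ :=
  poch (1 / 2) j * poch c j / (poch (c + 1 / 2) j * poch (2 * c) j)

variable {c}

lemma watsonTerm_eq_zero_of_lt {m : ℕ} (h : 2 * j < m) : watsonTerm c j m = 0 := by
  rw [watsonTerm, show -(2 * (j : ℝ)) = -(2 * j : ℕ) by push_cast; ring,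
    poch_neg_natCast_of_lt h, zero_mul, zero_mul, zero_div]

@[simp] lemma watsonCertificate_zero : watsonCertificate c j 0 = 0 := by
  simp [watsonCertificate]

lemma watsonCertificate_eq_zero : watsonCertificate c j (2 * j + 3) = 0 := by
  rw [watsonCertificate, show -(2 * (j : ℝ)) - 2 = -(2 * j + 2 : ℕ) by push_cast; ring,
    poch_neg_natCast_of_lt (by omega)]
  simp

lemma watsonTerm_succ_sub (hc : 1 / 4 < c) (m : ℕ) :
    watsonTerm c (j + 1) m
        - (2 * j + 1) * (c + j) / ((2 * c + 2 * j + 1) * (2 * c + j)) * watsonTerm c j m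
      = watsonCertificate c j (m + 1) - watsonCertificate c j m := by
  have hb : 0 < 4 * c + 2 * j - 1 := by linarith [j.cast_nonneg (α := ℝ)]
  have hA : poch (-(2 * j)) m
      = poch (-(2 * j) - 2) m * (2 * j + 2 - m) * (2 * j + 1 - m)
        / ((2 * j + 1) * (2 * j + 2)) := by
    have h := poch_add_two' (-(2 * j) - 2) m
    rw [poch_add_two, show -(2 * (j : ℝ)) - 2 + 2 = -(2 * j) by ring] at h
    rw [eq_div_iff (by positivity)]
    linear_combination -h
  have hB : poch (4 * c + 2 * j - 1 + 2) m
      = poch (4 * c + 2 * j - 1) m * (4 * c + 2 * j - 1 + m) * (4 * c + 2 * j - 1 + m + 1)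
        / ((4 * c + 2 * j - 1) * (4 * c + 2 * j - 1 + 1)) := by
    rw [eq_div_iff (by positivity), ← poch_add_two, poch_add_two']
    ring
  rw [watsonTerm, watsonTerm, watsonCertificate, watsonCertificate, poch_succ, poch_succ,
    poch_succ, poch_succ, factorial_succ, hA,
    show 4 * c + 2 * ((j + 1 : ℕ) : ℝ) - 1 = 4 * c + 2 * j - 1 + 2 by push_cast; ring, hB,
    show -(2 * ((j + 1 : ℕ) : ℝ)) = -(2 * j) - 2 by push_cast; ring]
  have := poch_pos (show 0 < 2 * c by linarith) m
  have : 2 * c + m ≠ 0 := by positivity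
  push_cast
  field_simp
  ring

lemma watsonValue_succ (hc : 0 < c) :
    watsonValue c (j + 1)
      = (2 * j + 1) * (c + j) / ((2 * c + 2 * j + 1) * (2 * c + j)) * watsonValue c j := by
  have := poch_pos (show 0 < c + 1 / 2 by linarith) j
  have := poch_pos (show 0 < 2 * c by linarith) j
  have : 2 * c + j ≠ 0 := by positivity
  have : 2 * c + 2 * j + 1 ≠ 0 := by positivity
  rw [watsonValue, watsonValue, poch_succ, poch_succ, poch_succ, poch_succ]
  field_simp
  ring

lemma sum_range_watsonTerm_of_le {N : ℕ} (h : 2 * j + 1 ≤ N) :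
    ∑ m ∈ range N, watsonTerm c j m = ∑ m ∈ range (2 * j + 1), watsonTerm c j m :=
  (sum_subset (range_subset_range.mpr h) fun _ _ hm ↦
    watsonTerm_eq_zero_of_lt j (by simpa using hm)).symm

theorem sum_watsonTerm (hc : 1 / 4 < c) :
    ∑ m ∈ range (2 * j + 1), watsonTerm c j m = watsonValue c j := by
  induction j with
  | zero => simp [watsonTerm, watsonValue]
  | succ j ih =>
    have telescope := sum_range_sub (watsonCertificate c j) (2 * j + 3)
    simp only [← watsonTerm_succ_sub j hc, sum_sub_distrib, ← mul_sum] at telescope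
    rw [watsonCertificate_eq_zero, watsonCertificate_zero, sub_zero,
      sum_range_watsonTerm_of_le j (by omega), ih, sub_eq_zero] at telescope
    rw [watsonValue_succ j (by linarith), ← telescope]
    rfl

end Watson

lemma blockCoefficient_eq (m j : ℕ) :
    (-1 / 4 : ℝ) ^ (m + 1)
      * (poch (2 * (m + 1)) (2 * j) ^ 2 / (poch (4 * (m + 1) + 2 * j - 1) (2 * j) * (2 * j)!))
      * watsonValue (m + 1) j / (m + 1)!
    = ((choose (4 * (m + 1 + j) - 2) (2 * (m + 1 + j) - 1) : ℝ))⁻¹ * (-1 / 2)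
      * (poch (1 - (m + 1 + j)) m * poch (m + 1 + j + 1 / 2) m) / (m ! * (m + 1)! * m !) := by
  have hC : (choose (4 * (m + 1 + j) - 2) (2 * (m + 1 + j) - 1) : ℝ)
      = (4 * m + 4 * j + 2)! / ((2 * m + 2 * j + 1)! * (2 * m + 2 * j + 1)!) := by
    rw [show 4 * (m + 1 + j) - 2 = 4 * m + 4 * j + 2 by omega,
      show 2 * (m + 1 + j) - 1 = 2 * m + 2 * j + 1 by omega, cast_choose ℝ (by omega),
      show 4 * m + 4 * j + 2 - (2 * m + 2 * j + 1) = 2 * m + 2 * j + 1 by omega]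
  have h1 : poch (2 * (m + 1)) (2 * j) = (2 * m + 2 * j + 1)! / (2 * m + 1)! :=
    poch_eq_factorial_div (by push_cast; ring) (by ring)
  have h2 : poch (4 * (m + 1) + 2 * j - 1) (2 * j)
      = (4 * m + 4 * j + 2)! / (2 * (m + 1 + j + m))! :=
    poch_eq_factorial_div (by push_cast; ring) (by ring)
  have h3 : poch (1 / 2) j = (2 * j)! * 0 ! / ((2 * 0)! * j ! * 4 ^ j) :=
    poch_eq_factorial_half (by simp) (by ring)
  have h4 : poch (m + 1) j = (m + j)! / m ! := poch_eq_factorial_div rfl rfl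
  have h5 : poch (m + 1 + 1 / 2) j
      = (2 * (m + 1 + j))! * (m + 1)! / ((2 * (m + 1))! * (m + 1 + j)! * 4 ^ j) :=
    poch_eq_factorial_half (by push_cast; ring) rfl
  have h6 : poch (2 * (m + 1)) j = (m + 1 + j + m)! / (2 * m + 1)! :=
    poch_eq_factorial_div (by push_cast; ring) (by ring)
  have h7 : poch (1 - (m + 1 + j)) m = (-1) ^ m * ((m + j)! / j !) :=
    poch_neg_eq_factorial_div (by push_cast; ring) (by ring)
  have h8 : poch (m + 1 + j + 1 / 2) m
      = (2 * (m + 1 + j + m))! * (m + 1 + j)! / ((2 * (m + 1 + j))! * (m + 1 + j + m)! * 4 ^ m) :=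
    poch_eq_factorial_half (by push_cast; ring) rfl
  rw [watsonValue, hC, h1, h2, h3, h4, h5, h6, h7, h8, show 2 * (m + 1) = 2 * m + 1 + 1 by ring,
    factorial_succ (2 * m + 1), factorial_succ m, div_pow]
  push_cast
  field_simp
  ring

lemma mul_poch_shift_ratio (Δ : ℝ) (m : ℕ) :
    Δ * (1 + Δ) / (5 - 4 * Δ)
        * (poch (1 - Δ) m * poch ((4 + Δ) / 3) m / poch ((11 - 4 * Δ) / 6) m)
      = -(1 / 2) * (poch (-Δ) (m + 1) * poch ((1 + Δ) / 3) (m + 1)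
          / poch ((5 - 4 * Δ) / 6) (m + 1)) := by
  rw [poch_succ' (-Δ), poch_succ' ((1 + Δ) / 3), poch_succ' ((5 - 4 * Δ) / 6),
    show -Δ + 1 = 1 - Δ by ring, show (1 + Δ) / 3 + 1 = (4 + Δ) / 3 by ring,
    show (5 - 4 * Δ) / 6 + 1 = (11 - 4 * Δ) / 6 by ring, mul_mul_mul_comm, mul_div_mul_comm,
    div_div_eq_mul_div]
  ring

noncomputable def blockTerm (k : ℕ) (Δ : ℝ) (n : ℕ) : ℝ :=
  (-1 / 4 : ℝ) ^ n
    * (poch (-Δ) n * poch ((1 + Δ) / 3) n / (poch ((5 - 4 * Δ) / 6) n * n !))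
    * (poch (2 * n) (2 * k - 2 * n) ^ 2
        / (poch (2 * n + 2 * k - 1) (2 * k - 2 * n) * (2 * k - 2 * n)!))
    * ∑ m ∈ range (2 * k - 2 * n + 1),
        poch (2 * n - 2 * k) m * poch (2 * n + 2 * k - 1) m * poch n m
          / (poch (2 * n) m ^ 2 * m !)

noncomputable def fourFThreeTerm (k : ℕ) (Δ : ℝ) (m : ℕ) : ℝ :=
  poch (1 - k) m * poch (k + 1 / 2) m * poch (1 - Δ) m * poch ((4 + Δ) / 3) m
    / (poch 1 m * poch 2 m * poch ((11 - 4 * Δ) / 6) m * m !)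

lemma blockTerm_eq (Δ : ℝ) (m j : ℕ) :
    blockTerm (m + 1 + j) Δ (m + 1)
      = ((choose (4 * (m + 1 + j) - 2) (2 * (m + 1 + j) - 1) : ℝ))⁻¹
        * (Δ * (1 + Δ) / (5 - 4 * Δ)) * fourFThreeTerm (m + 1 + j) Δ m := by
  have hW := sum_watsonTerm (c := (m + 1 : ℕ)) j
    (by push_cast; linarith [m.cast_nonneg (α := ℝ)])
  simp only [watsonTerm] at hW
  rw [blockTerm, fourFThreeTerm, show 2 * (m + 1 + j) - 2 * (m + 1) = 2 * j by omega,
    show 2 * ((m + 1 : ℕ) : ℝ) - 2 * ((m + 1 + j : ℕ) : ℝ) = -(2 * j) by push_cast; ring,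
    show 2 * ((m + 1 : ℕ) : ℝ) + 2 * ((m + 1 + j : ℕ) : ℝ) - 1
      = 4 * ((m + 1 : ℕ) : ℝ) + 2 * j - 1 by push_cast; ring,
    hW, poch_one, poch_two]
  have hcoef := blockCoefficient_eq m j
  have hΔ := mul_poch_shift_ratio Δ m
  push_cast at *
  -- the left side is the `Δ`-ratio times the left of `hcoef`; the right side is the
  -- coefficient below times the left of `hΔ`
  linear_combination
    (poch (-Δ) (m + 1) * poch ((1 + Δ) / 3) (m + 1) / poch ((5 - 4 * Δ) / 6) (m + 1)) * hcoef
    - ((choose (4 * (m + 1 + j) - 2) (2 * (m + 1 + j) - 1) : ℝ))⁻¹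
        * poch (1 - (m + 1 + j)) m * poch (m + 1 + j + 1 / 2) m / (m ! * (m + 1)! * m !) * hΔ

theorem stmt_6_general (k : ℕ) (Δ : ℝ) :
    ∑ n ∈ Finset.Icc 1 k,
      ((-1/4 : ℝ))^n
        * (poch (-Δ) n * poch ((1 + Δ)/3) n / (poch ((5 - 4*Δ)/6) n * (n.factorial : ℝ)))
        * ((poch (2*(n : ℝ)) (2*k - 2*n))^2
            / (poch (2*(n : ℝ) + 2*(k : ℝ) - 1) (2*k - 2*n) * ((2*k - 2*n).factorial : ℝ)))
        * ∑ m ∈ Finset.range (2*k - 2*n + 1),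
            (poch (2*(n : ℝ) - 2*(k : ℝ)) m * poch (2*(n : ℝ) + 2*(k : ℝ) - 1) m * poch (n : ℝ) m)
            / ((poch (2*(n : ℝ)) m)^2 * (m.factorial : ℝ))
    = ((Nat.choose (4*k - 2) (2*k - 1) : ℝ))⁻¹ * (Δ * (1 + Δ) / (5 - 4*Δ)) *
        ∑ m ∈ Finset.range k,
          (poch (1 - (k : ℝ)) m * poch ((k : ℝ) + 1/2) m * poch (1 - Δ) m * poch ((4 + Δ)/3) m)
          / (poch 1 m * poch 2 m * poch ((11 - 4*Δ)/6) m * (m.factorial : ℝ)) := by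
  change ∑ n ∈ Icc 1 k, blockTerm k Δ n = _ * ∑ m ∈ range k, fourFThreeTerm k Δ m
  rw [mul_sum, ← Ico_add_one_right_eq_Icc, sum_Ico_eq_sum_range, add_tsub_cancel_right]
  refine sum_congr rfl fun m hm ↦ ?_
  obtain ⟨j, rfl⟩ : ∃ j, k = m + 1 + j := ⟨k - m - 1, by have := mem_range.mp hm; omega⟩
  rw [add_comm 1 m, blockTerm_eq]

/-- Finite-sum hypergeometric identity expressing the sl(2) block coefficients
of the Virasoro identity block of `⟨σσσσ⟩` in closed ₄F₃ (Wilson polynomial) form. -/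
theorem stmt_6 (k : ℕ) (hk : 1 ≤ k) (Δ : ℝ) (hΔ0 : 0 < Δ) (hΔ1 : Δ < 5/4) :
    ∑ n ∈ Finset.Icc 1 k,
      ((-1/4 : ℝ))^n
        * (poch (-Δ) n * poch ((1 + Δ)/3) n / (poch ((5 - 4*Δ)/6) n * (n.factorial : ℝ)))
        * ((poch (2*(n : ℝ)) (2*k - 2*n))^2
            / (poch (2*(n : ℝ) + 2*(k : ℝ) - 1) (2*k - 2*n) * ((2*k - 2*n).factorial : ℝ)))
        * ∑ m ∈ Finset.range (2*k - 2*n + 1),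
            (poch (2*(n : ℝ) - 2*(k : ℝ)) m * poch (2*(n : ℝ) + 2*(k : ℝ) - 1) m * poch (n : ℝ) m)
            / ((poch (2*(n : ℝ)) m)^2 * (m.factorial : ℝ))
    = ((Nat.choose (4*k - 2) (2*k - 1) : ℝ))⁻¹ * (Δ * (1 + Δ) / (5 - 4*Δ)) *
        ∑ m ∈ Finset.range k,
          (poch (1 - (k : ℝ)) m * poch ((k : ℝ) + 1/2) m * poch (1 - Δ) m * poch ((4 + Δ)/3) m)
          / (poch 1 m * poch 2 m * poch ((11 - 4*Δ)/6) m * (m.factorial : ℝ)) :=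
  stmt_6_general k Δ
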